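/- Let n ≥ 2, let ξ ∈ ℝⁿ with ξ' ≠ 0, and let τ ≥ |ξ|/2 be a positive real. Set μ₁ := −(ξ_n/|ξ|) e(1) + (|ξ'|/|ξ|) e_n and let μ₂ ∈ ℝⁿ be any unit vector orthogonal to both ξ and μ₁ whose last coordinate is zero. Define ρ₁ := (i/(2τ)) ξ + i√(1 − |ξ|²/(4τ²)) μ₁ + μ₂ and ρ₂ := −(i/(2τ)) ξ + i√(1 − |ξ|²/(4τ²)) μ₁ − μ₂ in ℂⁿ. Then: τ(ρ₁ + conj(ρ₂*)) = i (ξ', 2√(τ² − |ξ|²/4) · |ξ'|/|ξ|), τ(ρ₁* + conj(ρ₂)) = i (ξ', −2√(τ² − |ξ|²/4) · |ξ'|/|ξ|), and τ(ρ₁* + conj(ρ₂*)) = i ξ*, where conj denotes componentwise complex conjugation. -/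

import Mathlib

open MeasureTheory Filter Complex
open scoped ENNReal RealInnerProductSpace

noncomputable section

/-- Reflection `x* = (x', -x_n)` of a point in `ℝⁿ`. -/
def reflVec (n : ℕ) (x : EuclideanSpace ℝ (Fin n)) : EuclideanSpace ℝ (Fin n) :=
  WithLp.toLp 2 fun i => if (i : ℕ) = n - 1 then -x i else x i

/-- Reflection `ρ* = (Re ρ)* + i (Im ρ)*` of a complex vector: the sign of the last
coordinate is flipped. -/
def creflVec (n : ℕ) (ρ : EuclideanSpace ℂ (Fin n)) : EuclideanSpace ℂ (Fin n) :=
  WithLp.toLp 2 fun i => if (i : ℕ) = n - 1 then -ρ i else ρ i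

/-- The last index of `Fin n` (i.e. the `n`-th coordinate). -/
def lastIdx (n : ℕ) (hn : 0 < n) : Fin n := ⟨n - 1, Nat.sub_lt hn one_pos⟩

/-- `|ξ'|`, the Euclidean norm of the first `n-1` coordinates of `ξ`. -/
def xiPrimeNorm (n : ℕ) (ξ : EuclideanSpace ℝ (Fin n)) : ℝ :=
  Real.sqrt (∑ i ∈ Finset.univ.filter (fun i : Fin n => (i : ℕ) < n - 1), ξ i ^ 2)

/-- `e(1) := (ξ'/|ξ'|, 0)`. -/
def eOneVec (n : ℕ) (ξ : EuclideanSpace ℝ (Fin n)) : EuclideanSpace ℝ (Fin n) :=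
  WithLp.toLp 2 fun i => if (i : ℕ) < n - 1 then ξ i / xiPrimeNorm n ξ else 0

/-- `μ₁ := -(ξ_n/|ξ|) e(1) + (|ξ'|/|ξ|) e_n`. -/
def muOneVec (n : ℕ) (hn : 0 < n) (ξ : EuclideanSpace ℝ (Fin n)) :
    EuclideanSpace ℝ (Fin n) :=
  (-(ξ (lastIdx n hn) / ‖ξ‖)) • eOneVec n ξ +
    (xiPrimeNorm n ξ / ‖ξ‖) • EuclideanSpace.single (lastIdx n hn) (1 : ℝ)

open scoped ComplexConjugate

/-! Coordinatewise `ρ₁ = i x/(2τ) + i s m + u` and `ρ₂ = -i x/(2τ) + i s m - u`, with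
`x = ξ_j`, `m = (μ₁)_j`, `u = (μ₂)_j` real and `s = √(1 - |ξ|²/(4τ²))`. Hence
`τ (ρ₁ + conj ρ₂) = i x` in every coordinate. Where the reflection acts on exactly one of the two
vectors the sum becomes `±τ (ρ₁ - conj ρ₂) = ±(2 i τ s m + 2 τ u)`, and in the last coordinate
`u = 0`, `m = |ξ'|/|ξ|` and `τ s = √(τ² - |ξ|²/4)`. -/

theorem muOneVec_apply_lastIdx (n : ℕ) (hn : 0 < n) (ξ : EuclideanSpace ℝ (Fin n)) :
    muOneVec n hn ξ (lastIdx n hn) = xiPrimeNorm n ξ / ‖ξ‖ := by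
  simp [muOneVec, eOneVec, lastIdx]

theorem mul_sqrt_one_sub_div_four_mul_sq {τ : ℝ} (hτ : 0 < τ) (a : ℝ) :
    τ * √(1 - a / (4 * τ ^ 2)) = √(τ ^ 2 - a / 4) := by
  have h : τ ^ 2 - a / 4 = τ ^ 2 * (1 - a / (4 * τ ^ 2)) := by field_simp
  rw [h, Real.sqrt_mul (sq_nonneg τ), Real.sqrt_sq hτ.le]

section Coordinates

variable {τ : ℝ} (s x m u : ℝ)

theorem ofReal_mul_add_conj (hτ : τ ≠ 0) :
    (τ : ℂ) * ((I / (2 * τ) * x + I * s * m + u) + conj (-(I / (2 * τ)) * x + I * s * m - u)) =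
      I * x := by
  have hτ' : (τ : ℂ) ≠ 0 := ofReal_ne_zero.mpr hτ
  simp only [map_add, map_sub, map_neg, map_mul, map_div₀, map_ofNat, conj_ofReal, conj_I]
  field_simp
  ring

theorem ofReal_mul_sub_conj :
    (τ : ℂ) * ((I / (2 * τ) * x + I * s * m + u) - conj (-(I / (2 * τ)) * x + I * s * m - u)) =
      I * ((2 * (τ * s) * m : ℝ) : ℂ) + 2 * τ * u := by
  simp only [map_add, map_sub, map_neg, map_mul, map_div₀, map_ofNat, conj_ofReal, conj_I]
  push_cast
  ring

end Coordinates

theorem stmt13 (n : ℕ) (hn : 2 ≤ n) (ξ : EuclideanSpace ℝ (Fin n))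
    (τ : ℝ) (hτ0 : 0 < τ)
    (μ₁ μ₂ : EuclideanSpace ℝ (Fin n))
    (hμ₁def : μ₁ = muOneVec n (by omega) ξ)
    (hμ₂last : μ₂ (lastIdx n (by omega)) = 0)
    (ρ₁ ρ₂ : EuclideanSpace ℂ (Fin n))
    (hρ₁ : ∀ j, ρ₁ j = Complex.I / (2 * (τ : ℂ)) * (ξ j : ℂ) +
      Complex.I * (Real.sqrt (1 - ‖ξ‖ ^ 2 / (4 * τ ^ 2)) : ℂ) * (μ₁ j : ℂ) + (μ₂ j : ℂ))
    (hρ₂ : ∀ j, ρ₂ j = -(Complex.I / (2 * (τ : ℂ))) * (ξ j : ℂ) +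
      Complex.I * (Real.sqrt (1 - ‖ξ‖ ^ 2 / (4 * τ ^ 2)) : ℂ) * (μ₁ j : ℂ) - (μ₂ j : ℂ)) :
    (∀ j : Fin n, (τ : ℂ) * (ρ₁ j + starRingEnd ℂ (creflVec n ρ₂ j)) =
      Complex.I * ((if (j : ℕ) = n - 1 then
        2 * Real.sqrt (τ ^ 2 - ‖ξ‖ ^ 2 / 4) * xiPrimeNorm n ξ / ‖ξ‖ else ξ j : ℝ) : ℂ)) ∧
    (∀ j : Fin n, (τ : ℂ) * (creflVec n ρ₁ j + starRingEnd ℂ (ρ₂ j)) =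
      Complex.I * ((if (j : ℕ) = n - 1 then
        -(2 * Real.sqrt (τ ^ 2 - ‖ξ‖ ^ 2 / 4) * xiPrimeNorm n ξ / ‖ξ‖) else ξ j : ℝ) : ℂ)) ∧
    (∀ j : Fin n, (τ : ℂ) * (creflVec n ρ₁ j + starRingEnd ℂ (creflVec n ρ₂ j)) =
      Complex.I * ((reflVec n ξ j : ℝ) : ℂ)) := by
  have hn0 : 0 < n := by omega
  have hsum : ∀ j, (τ : ℂ) * (ρ₁ j + conj (ρ₂ j)) = I * ξ j := fun j => by
    rw [hρ₁, hρ₂]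
    exact ofReal_mul_add_conj _ _ _ _ hτ0.ne'
  have hdiff : ∀ j : Fin n, (j : ℕ) = n - 1 → (τ : ℂ) * (ρ₁ j - conj (ρ₂ j)) =
      I * ((2 * √(τ ^ 2 - ‖ξ‖ ^ 2 / 4) * xiPrimeNorm n ξ / ‖ξ‖ : ℝ) : ℂ) := fun j hj => by
    obtain rfl : j = lastIdx n hn0 := Fin.ext hj
    rw [hρ₁, hρ₂, ofReal_mul_sub_conj, hμ₂last, hμ₁def, muOneVec_apply_lastIdx,
      mul_sqrt_one_sub_div_four_mul_sq hτ0]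
    push_cast
    ring
  refine ⟨fun j => ?_, fun j => ?_, fun j => ?_⟩ <;>
    by_cases hj : (j : ℕ) = n - 1 <;>
    simp only [creflVec, reflVec, PiLp.toLp_apply, hj, if_true, if_false, map_neg]
  · rw [← sub_eq_add_neg, hdiff j hj]
  · exact hsum j
  · rw [neg_add_eq_sub, ← neg_sub, mul_neg, hdiff j hj, ofReal_neg, mul_neg]
  · exact hsum j
  · rw [← neg_add, mul_neg, hsum j, ofReal_neg, mul_neg]
  · exact hsum j
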